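/- arXiv:1706.00908 — 5 statements merged into one kernel-verified Lean document; each statement's English description precedes it below -/
import Mathlib

section
/- Let n ≥ 2, let δ ∈ (0,1) and ε ∈ (0,1), let D be an n×n diagonal matrix with diagonal entries d_1,…,d_n ∈ [0,1], and let A_ε := δI + (1−δ)𝟏𝟏^T + εD, with f(x) := (1/2)·x^T A_ε x. Fix an index i ∈ {1,…,n} and a starting point x⁰ ∈ ℝⁿ, and let x¹ be the result of one exact-line-search coordinate-descent step on f in coordinate i, i.e. x¹_i = −((1−δ)/(1+ε d_i))·∑_{j≠i} x⁰_j and x¹_j = x⁰_j for j ≠ i. Then f(x¹) ≤ (1/2)·∑_{j≠i} (x⁰_j)²·(δ + ε d_j) + ((1−δ)(δ+ε)/(2(1+ε)))·(∑_{j≠i} x⁰_j)². -/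
/-!
Writing `b = ε dᵢ`, `S = ∑_{j≠i} x⁰_j` and `t = x¹_i`, the value `2 f(x¹)` is the
off-coordinate part `∑_{j≠i} (x⁰_j)² (δ + ε d_j)` plus the one-variable quadratic
`(δ + b) t² + (1 - δ)(S + t)²`. The exact line search puts `t` at the minimiser of that
quadratic, where it equals the parallel sum `(δ + b)(1 - δ) / (1 + b) · S²`; this is
monotone in `δ + b`, so `b ≤ ε` gives the bound.
-/

open Matrix Finset

section QuadraticForm

variable {ι R : Type*} [Fintype ι] [CommRing R]

lemma dotProduct_mulVec_vecMulVec_one (x : ι → R) :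
    x ⬝ᵥ (vecMulVec (fun _ => 1) (fun _ => 1) *ᵥ x) = (∑ j, x j) ^ 2 := by
  simp [vecMulVec_mulVec, dotProduct, sum_mul, sq]

variable [DecidableEq ι]

lemma dotProduct_mulVec_diagonal (d x : ι → R) :
    x ⬝ᵥ (diagonal d *ᵥ x) = ∑ j, x j ^ 2 * d j := by
  simp only [dotProduct, mulVec_diagonal]
  exact sum_congr rfl fun j _ => by ring

lemma dotProduct_mulVec_smul_one_add_smul_vecMulVec_add_smul_diagonal
    (δ c ε : R) (d x : ι → R) :
    x ⬝ᵥ ((δ • 1 + c • vecMulVec (fun _ => 1) (fun _ => 1) + ε • diagonal d) *ᵥ x)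
      = ∑ j, x j ^ 2 * (δ + ε * d j) + c * (∑ j, x j) ^ 2 := by
  rw [add_mulVec, add_mulVec, smul_mulVec, smul_mulVec, smul_mulVec, one_mulVec,
    dotProduct_add, dotProduct_add, dotProduct_smul, dotProduct_smul, dotProduct_smul,
    dotProduct_mulVec_vecMulVec_one, dotProduct_mulVec_diagonal]
  simp only [smul_eq_mul, dotProduct, mul_sum, add_right_comm _ (c * _), ← sum_add_distrib]
  exact congrArg (· + _) (sum_congr rfl fun j _ => by ring)

end QuadraticForm

lemma sum_apply_update_eq_add_sum_erase {ι α M : Type*} [Fintype ι] [DecidableEq ι]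
    [AddCommMonoid M] (g : ι → α → M) (x : ι → α) (i : ι) (t : α) :
    ∑ j, g j (Function.update x i t j) = g i t + ∑ j ∈ univ.erase i, g j (x j) := by
  rw [← add_sum_erase _ _ (mem_univ i), Function.update_self]
  congr 1
  exact sum_congr rfl fun j hj => by rw [Function.update_of_ne (ne_of_mem_erase hj)]

lemma mul_sq_add_mul_add_sq_at_argmin {K : Type*} [Field K] {a c s : K}
    (hs : a + c = s) (hs0 : s ≠ 0) (S : K) :
    a * (-(c / s) * S) ^ 2 + c * (S + -(c / s) * S) ^ 2 = a * c / s * S ^ 2 := by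
  subst hs
  field_simp
  ring

lemma mul_div_le_mul_div_of_add_eq {a a' c s s' : ℝ} (hs : a + c = s) (hs' : a' + c = s')
    (hs0 : 0 < s) (h : a ≤ a') : a * c / s ≤ a' * c / s' := by
  subst hs hs'
  have key : ∀ b, b + c ≠ 0 → b * c / (b + c) = c - c ^ 2 / (b + c) := fun b hb => by
    field_simp
    ring
  rw [key a hs0.ne', key a' (by linarith)]
  gcongr

theorem first_iteration_decrease_general
    (n : ℕ) (δ ε : ℝ) (hε : 0 < ε ∧ ε < 1)
    (d : Fin n → ℝ) (hd : ∀ j, 0 ≤ d j ∧ d j ≤ 1)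
    (A : Matrix (Fin n) (Fin n) ℝ)
    (hA : A = δ • (1 : Matrix (Fin n) (Fin n) ℝ)
        + (1 - δ) • Matrix.vecMulVec (fun _ => 1) (fun _ => 1)
        + ε • Matrix.diagonal d)
    (f : (Fin n → ℝ) → ℝ) (hf : ∀ x, f x = (1/2) * (x ⬝ᵥ A.mulVec x))
    (i : Fin n) (x0 x1 : Fin n → ℝ)
    (hx1 : x1 = Function.update x0 i
        (-((1 - δ) / (1 + ε * d i)) * ∑ j ∈ Finset.univ.erase i, x0 j)) :
    f x1 ≤ (1/2) * ∑ j ∈ Finset.univ.erase i, (x0 j)^2 * (δ + ε * d j)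
      + ((1 - δ) * (δ + ε) / (2 * (1 + ε))) * (∑ j ∈ Finset.univ.erase i, x0 j)^2 := by
  set S := ∑ j ∈ univ.erase i, x0 j
  set t := -((1 - δ) / (1 + ε * d i)) * S
  have hdi : 0 ≤ ε * d i := mul_nonneg hε.1.le (hd i).1
  have hdi_le : ε * d i ≤ ε := mul_le_of_le_one_right hε.1.le (hd i).2
  have hsplit : f x1 = (1/2) * ∑ j ∈ univ.erase i, x0 j ^ 2 * (δ + ε * d j)
      + (1/2) * ((δ + ε * d i) * t ^ 2 + (1 - δ) * (S + t) ^ 2) := by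
    rw [hf, hA, hx1, dotProduct_mulVec_smul_one_add_smul_vecMulVec_add_smul_diagonal,
      sum_apply_update_eq_add_sum_erase (fun j y => y ^ 2 * (δ + ε * d j)),
      sum_update_of_mem (mem_univ i), sdiff_singleton_eq_erase]
    ring
  have hmono := mul_div_le_mul_div_of_add_eq (a := δ + ε * d i) (c := 1 - δ) (s := 1 + ε * d i)
    (a' := δ + ε) (s' := 1 + ε) (by ring) (by ring) (by linarith) (by linarith)
  calc
    f x1 = (1/2) * ∑ j ∈ univ.erase i, x0 j ^ 2 * (δ + ε * d j)
        + (1/2) * ((δ + ε * d i) * (1 - δ) / (1 + ε * d i) * S ^ 2) := by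
      rw [hsplit, mul_sq_add_mul_add_sq_at_argmin (by ring) (by linarith)]
    _ ≤ (1/2) * ∑ j ∈ univ.erase i, x0 j ^ 2 * (δ + ε * d j)
        + (1/2) * ((δ + ε) * (1 - δ) / (1 + ε) * S ^ 2) := by gcongr
    _ = _ := by
      congr 1
      field_simp

theorem first_iteration_decrease
    (n : ℕ) (hn : 2 ≤ n) (δ ε : ℝ) (hδ : 0 < δ ∧ δ < 1) (hε : 0 < ε ∧ ε < 1)
    (d : Fin n → ℝ) (hd : ∀ j, 0 ≤ d j ∧ d j ≤ 1)
    (A : Matrix (Fin n) (Fin n) ℝ)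
    (hA : A = δ • (1 : Matrix (Fin n) (Fin n) ℝ)
        + (1 - δ) • Matrix.vecMulVec (fun _ => 1) (fun _ => 1)
        + ε • Matrix.diagonal d)
    (f : (Fin n → ℝ) → ℝ) (hf : ∀ x, f x = (1/2) * (x ⬝ᵥ A.mulVec x))
    (i : Fin n) (x0 x1 : Fin n → ℝ)
    (hx1 : x1 = Function.update x0 i
        (-((1 - δ) / (1 + ε * d i)) * ∑ j ∈ Finset.univ.erase i, x0 j)) :
    f x1 ≤ (1/2) * ∑ j ∈ Finset.univ.erase i, (x0 j)^2 * (δ + ε * d j)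
      + ((1 - δ) * (δ + ε) / (2 * (1 + ε))) * (∑ j ∈ Finset.univ.erase i, x0 j)^2 :=
  first_iteration_decrease_general n δ ε hε d hd A hA f hf i x0 x1 hx1
end

section
/- Let n ≥ 2, let δ ∈ (0,1) and ε ∈ (0,1), let D be an n×n diagonal matrix with diagonal entries d_1,…,d_n ∈ [0,1], and let A_ε := δI + (1−δ)𝟏𝟏^T + εD, with f(x) := (1/2)·x^T A_ε x. For each i ∈ {1,…,n} and starting point x⁰ ∈ ℝⁿ let x¹(i) be the result of one exact-line-search coordinate-descent step on f in coordinate i, i.e. x¹(i)_i = −((1−δ)/(1+ε d_i))·∑_{j≠i} x⁰_j and x¹(i)_j = x⁰_j for j ≠ i. Then the average over i uniformly distributed in {1,…,n} satisfies (1/n)·∑_{i=1}^n f(x¹(i)) ≤ ((δ+ε)/(2n))·(n − (δ+ε)/(1+ε))·‖x⁰‖² + ((n−2)/n)·((1−δ)(δ+ε)/(1+ε))·(𝟏^T x⁰)². -/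
/-!
Write `2 f(x) = δ ‖x‖² + (1 - δ) (𝟏ᵀx)² + ε ∑ⱼ dⱼ xⱼ²`. The step in coordinate `i` replaces `xᵢ`
by the minimiser `c` of `p c² + b (c + t)²`, where `p = δ + ε dᵢ`, `b = 1 - δ` and
`t = ∑_{j ≠ i} xⱼ`; the minimum `p b / (p + b) · t²` is increasing in `p`, hence at most
`K t²` with `K = (1 - δ)(δ + ε)/(1 + ε)` because `dᵢ ≤ 1`. Bounding also `dⱼ ≤ 1` in the other
coordinates and averaging over `i` with `∑ᵢ (𝟏ᵀx - xᵢ)² = (n - 2)(𝟏ᵀx)² + ‖x‖²` gives the claim.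
-/

open Matrix Finset

variable {ι : Type*} [Fintype ι]

theorem sum_apply_update [DecidableEq ι] {α M : Type*} [AddCommGroup M] (g : ι → α → M)
    (x : ι → α) (i : ι) (c : α) :
    ∑ j, g j (Function.update x i c j) = ∑ j, g j (x j) - g i (x i) + g i c := by
  rw [← add_sum_erase _ _ (mem_univ i), ← add_sum_erase _ (fun j => g j (x j)) (mem_univ i),
    sum_congr rfl fun j hj => by rw [Function.update_of_ne (ne_of_mem_erase hj)]]
  simp only [Function.update_self]
  abel

theorem sum_sub_sq {R : Type*} [CommRing R] (x : ι → R) :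
    ∑ i, (∑ j, x j - x i) ^ 2 = (Fintype.card ι - 2) * (∑ j, x j) ^ 2 + ∑ j, x j ^ 2 := by
  simp only [sub_sq, sum_add_distrib, sum_sub_distrib, ← mul_sum, sum_const, card_univ,
    nsmul_eq_mul]
  ring

theorem dotProduct_vecMulVec_mulVec {R : Type*} [CommSemiring R] (u v x : ι → R) :
    x ⬝ᵥ (vecMulVec u v *ᵥ x) = (x ⬝ᵥ u) * (v ⬝ᵥ x) := by
  simp [vecMulVec_mulVec, dotProduct_smul, mul_comm]

section QuadForm

variable {R : Type*} [CommRing R]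

def quadForm (δ ε : R) (d x : ι → R) : R :=
  δ * ∑ j, x j ^ 2 + (1 - δ) * (∑ j, x j) ^ 2 + ε * ∑ j, d j * x j ^ 2

theorem dotProduct_mulVec_eq_quadForm [DecidableEq ι] (δ ε : R) (d x : ι → R) :
    x ⬝ᵥ ((δ • 1 + (1 - δ) • vecMulVec (fun _ => 1) (fun _ => 1) + ε • diagonal d) *ᵥ x)
      = quadForm δ ε d x := by
  simp only [add_mulVec, smul_mulVec, one_mulVec, dotProduct_add, dotProduct_smul,
    dotProduct_vecMulVec_mulVec]
  simp [quadForm, dotProduct, mulVec_diagonal, sq, mul_left_comm]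

theorem quadForm_update [DecidableEq ι] (δ ε : R) (d x : ι → R) (i : ι) (c : R) :
    quadForm δ ε d (Function.update x i c)
      = δ * (∑ j, x j ^ 2 - x i ^ 2) + ε * (∑ j, d j * x j ^ 2 - d i * x i ^ 2)
        + ((δ + ε * d i) * c ^ 2 + (1 - δ) * (c + (∑ j, x j - x i)) ^ 2) := by
  simp only [quadForm, sum_apply_update (fun _ y => y ^ 2), sum_apply_update (fun _ y => y),
    sum_apply_update (fun j y => d j * y ^ 2)]
  ring

end QuadForm

theorem lineSearch_value {K : Type*} [Field K] {p b : K} (t : K) (h : p + b ≠ 0) :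
    p * (-(b / (p + b)) * t) ^ 2 + b * (-(b / (p + b)) * t + t) ^ 2 = p * b / (p + b) * t ^ 2 := by
  field_simp
  ring

theorem mul_div_add_le_mul_div_add {K : Type*} [Field K] [LinearOrder K] [IsStrictOrderedRing K]
    {p q b : K} (hb : 0 ≤ b) (hp : 0 < p) (hpq : p ≤ q) :
    p * b / (p + b) ≤ q * b / (q + b) := by
  rw [div_le_div_iff₀ (by positivity) (by linarith)]
  nlinarith [mul_nonneg (mul_nonneg hb hb) (sub_nonneg.2 hpq)]

theorem quadForm_lineSearch_le [DecidableEq ι] {δ ε : ℝ} (hδ₀ : 0 < δ) (hδ₁ : δ ≤ 1) (hε : 0 ≤ ε)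
    {d : ι → ℝ} (hd : ∀ j, 0 ≤ d j ∧ d j ≤ 1) (x : ι → ℝ) (i : ι) :
    quadForm δ ε d (Function.update x i
        (-((1 - δ) / (1 + ε * d i)) * ∑ j ∈ univ.erase i, x j))
      ≤ (δ + ε) * (∑ j, x j ^ 2 - x i ^ 2)
        + (1 - δ) * (δ + ε) / (1 + ε) * (∑ j, x j - x i) ^ 2 := by
  have hsplit : ∀ e : ℝ, 1 + ε * e = (δ + ε * e) + (1 - δ) := fun e => by ring
  have hpos : 0 < δ + ε * d i := by nlinarith [(hd i).1]
  rw [sum_erase_eq_sub (mem_univ i), quadForm_update, hsplit, lineSearch_value _ (by linarith)]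
  have hdiag : ∑ j, d j * x j ^ 2 - d i * x i ^ 2 ≤ ∑ j, x j ^ 2 - x i ^ 2 := by
    rw [← sum_erase_eq_sub (mem_univ i), ← sum_erase_eq_sub (mem_univ i)]
    exact sum_le_sum fun j _ => mul_le_of_le_one_left (sq_nonneg _) (hd j).2
  have hgain := mul_div_add_le_mul_div_add (b := 1 - δ) (q := δ + ε) (by linarith) hpos
    (by nlinarith [(hd i).2])
  rw [show δ + ε + (1 - δ) = 1 + ε by ring, mul_comm (δ + ε)] at hgain
  linarith [mul_le_mul_of_nonneg_left hdiag hε,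
    mul_le_mul_of_nonneg_right hgain (sq_nonneg (∑ j, x j - x i))]

theorem expected_first_iteration_decrease
    (n : ℕ) (hn : 2 ≤ n) (δ ε : ℝ) (hδ : 0 < δ ∧ δ < 1) (hε : 0 < ε ∧ ε < 1)
    (d : Fin n → ℝ) (hd : ∀ j, 0 ≤ d j ∧ d j ≤ 1)
    (A : Matrix (Fin n) (Fin n) ℝ)
    (hA : A = δ • (1 : Matrix (Fin n) (Fin n) ℝ)
        + (1 - δ) • Matrix.vecMulVec (fun _ => 1) (fun _ => 1)
        + ε • Matrix.diagonal d)
    (f : (Fin n → ℝ) → ℝ) (hf : ∀ x, f x = (1/2) * (x ⬝ᵥ A.mulVec x))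
    (x0 : Fin n → ℝ) (x1 : Fin n → (Fin n → ℝ))
    (hx1 : ∀ i, x1 i = Function.update x0 i
        (-((1 - δ) / (1 + ε * d i)) * ∑ j ∈ Finset.univ.erase i, x0 j)) :
    (1 / (n : ℝ)) * ∑ i, f (x1 i)
      ≤ ((δ + ε) / (2 * (n : ℝ))) * ((n : ℝ) - (δ + ε) / (1 + ε)) * (∑ j, (x0 j)^2)
        + (((n : ℝ) - 2) / (n : ℝ)) * ((1 - δ) * (δ + ε) / (1 + ε)) * (∑ j, x0 j)^2 := by
  set S := ∑ j, x0 j ^ 2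
  set s := ∑ j, x0 j
  set K := (1 - δ) * (δ + ε) / (1 + ε) with hK_def
  have hn' : (2 : ℝ) ≤ n := by exact_mod_cast hn
  have hn0 : (n : ℝ) ≠ 0 := (by linarith : (0 : ℝ) < n).ne'
  have hK : 0 ≤ K := div_nonneg (mul_nonneg (by linarith) (by linarith)) (by linarith)
  have hsum : ∑ i, f (x1 i) ≤ ((δ + ε) * (n - 1) * S + K * ((n - 2) * s ^ 2 + S)) / 2 := by
    calc ∑ i, f (x1 i)
        ≤ ∑ i, ((δ + ε) * (S - x0 i ^ 2) + K * (s - x0 i) ^ 2) / 2 := by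
          refine sum_le_sum fun i _ => ?_
          rw [hf, hA, dotProduct_mulVec_eq_quadForm, hx1]
          linarith [quadForm_lineSearch_le hδ.1 hδ.2.le hε.1.le hd x0 i]
      _ = ((δ + ε) * (n - 1) * S + K * ((n - 2) * s ^ 2 + S)) / 2 := by
          rw [← sum_div, sum_add_distrib, ← mul_sum, ← mul_sum, sum_sub_distrib,
            show ∑ i, (s - x0 i) ^ 2 = _ from sum_sub_sq x0]
          simp only [sum_const, card_univ, Fintype.card_fin, nsmul_eq_mul]
          ring
  -- averaging loses exactly `(n - 2) K s² / (2n)`, since `(δ + ε) (1 - (δ + ε) / (1 + ε)) = K`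
  have hslack : ((δ + ε) / (2 * n)) * (n - (δ + ε) / (1 + ε)) * S + ((n - 2) / n) * K * s ^ 2
      - 1 / n * (((δ + ε) * (n - 1) * S + K * ((n - 2) * s ^ 2 + S)) / 2)
      = (n - 2) * K * s ^ 2 / (2 * n) := by
    have : 1 + ε ≠ 0 := by linarith
    rw [hK_def]
    field_simp
    ring
  have hslack_nonneg : 0 ≤ (n - 2) * K * s ^ 2 / (2 * n) := by
    have : (0 : ℝ) ≤ n - 2 := by linarith
    positivity
  calc 1 / (n : ℝ) * ∑ i, f (x1 i)
      ≤ 1 / n * (((δ + ε) * (n - 1) * S + K * ((n - 2) * s ^ 2 + S)) / 2) := by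
        gcongr
    _ ≤ _ := by linarith
end

section
/- Let n ≥ 2, let F be the n×n matrix with F_{i,i+1} = 1 for i = 1,…,n−1 and all other entries 0, and let D be an n×n diagonal matrix with diagonal vector d := D𝟏 and d_av := 𝟏^T d / n. Then the average over all n! permutation matrices P satisfies (1/n!)·∑_{P} P F^T P^T D P e₁ = (1/(n−1))·( d_av·𝟏 − (1/n)·d ). -/
/-!
Following `e₁` through the product: `P e₁ = e_{σ 1}`, `D` scales it by `d_{σ 1}`, `Pᵀ` returns it
to `e₁`, `Fᵀ` shifts it to `e₂` and `P` sends that to `e_{σ 2}`. So the summand for `σ` is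
`d_{σ 1} e_{σ 2}`. As `σ` runs over all permutations, `(σ 1, σ 2)` runs over the ordered pairs
of distinct indices, each `(n - 2)!` times, so the `i`-th entry of the sum is
`(n - 2)! ∑_{p ≠ i} d_p = (n - 2)! (n d_av - d_i)`.
-/

open Matrix Finset

/-- The matrix with ones on the superdiagonal. -/
def matF (n : ℕ) : Matrix (Fin n) (Fin n) ℝ :=
  Matrix.of fun i j => if (i : ℕ) + 1 = (j : ℕ) then 1 else 0

/-- The permutation matrix `P` of `σ`, satisfying `P e_j = e_{σ j}`. -/
def permMat {n : ℕ} (σ : Equiv.Perm (Fin n)) : Matrix (Fin n) (Fin n) ℝ :=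
  Matrix.of fun i j => if i = σ j then 1 else 0

section PermMat

variable {n : ℕ}

lemma permMat_mulVec_single (σ : Equiv.Perm (Fin n)) (j : Fin n) (c : ℝ) :
    permMat σ *ᵥ Pi.single j c = Pi.single (σ j) c := by
  ext i
  simp [permMat, Pi.single_apply]

lemma permMat_transpose_mulVec_single (σ : Equiv.Perm (Fin n)) (j : Fin n) (c : ℝ) :
    (permMat σ)ᵀ *ᵥ Pi.single j c = Pi.single (σ.symm j) c := by
  ext i
  simp [permMat, Pi.single_apply, Equiv.eq_symm_apply, eq_comm]

lemma matF_transpose_mulVec_single {i j : Fin n} (hij : (i : ℕ) + 1 = j) (c : ℝ) :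
    (matF n)ᵀ *ᵥ Pi.single i c = Pi.single j c := by
  ext k
  simp [matF, mulVec, dotProduct, Pi.single_apply, hij, Fin.val_eq_val, eq_comm]

lemma permMat_conj_matF_transpose_mulVec_single (σ : Equiv.Perm (Fin n)) (d : Fin n → ℝ)
    {i j : Fin n} (hij : (i : ℕ) + 1 = j) :
    (permMat σ * (matF n)ᵀ * (permMat σ)ᵀ * diagonal d * permMat σ) *ᵥ Pi.single i 1
      = Pi.single (σ j) (d (σ i)) := by
  simp only [← mulVec_mulVec, permMat_mulVec_single, diagonal_mulVec_single, mul_one,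
    permMat_transpose_mulVec_single, Equiv.symm_apply_apply, matF_transpose_mulVec_single hij]

end PermMat

section SumPerm

variable {M : Type*} {m : ℕ}

lemma sum_perm_apply_zero [AddCommMonoid M] (g : Fin (m + 1) → M) :
    ∑ σ : Equiv.Perm (Fin (m + 1)), g (σ 0) = m.factorial • ∑ p, g p := by
  rw [← Equiv.sum_comp Equiv.Perm.decomposeFin.symm, Fintype.sum_prod_type, Finset.smul_sum]
  simp [Finset.card_univ, Fintype.card_perm]

lemma sum_swap_zero_apply_succ [AddCommGroup M] (p : Fin (m + 1)) (g : Fin (m + 1) → M) :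
    ∑ q : Fin m, g (Equiv.swap 0 p q.succ) = ∑ r, g r - g p := by
  rw [← Equiv.sum_comp (Equiv.swap 0 p) g, Fin.sum_univ_succ, Equiv.swap_apply_left]
  abel

lemma sum_perm_apply_zero_apply_one [AddCommGroup M] (f : Fin (m + 2) → Fin (m + 2) → M) :
    ∑ σ : Equiv.Perm (Fin (m + 2)), f (σ 0) (σ 1) = m.factorial • ∑ p, (∑ q, f p q - f p p) := by
  -- `decomposeFin` writes `σ` as `swap 0 (σ 0)` composed with a permutation fixing `0`.
  rw [← Equiv.sum_comp Equiv.Perm.decomposeFin.symm, Fintype.sum_prod_type, Finset.smul_sum]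
  refine Finset.sum_congr rfl fun p _ => ?_
  simp only [Equiv.Perm.decomposeFin_symm_apply_zero, Equiv.Perm.decomposeFin_symm_apply_one]
  rw [sum_perm_apply_zero (fun q => f p (Equiv.swap 0 p q.succ)), sum_swap_zero_apply_succ]

lemma sum_perm_single_apply_one [AddCommGroup M] (d : Fin (m + 2) → M) :
    ∑ σ : Equiv.Perm (Fin (m + 2)), Pi.single (σ 1) (d (σ 0))
      = m.factorial • ((fun _ => ∑ i, d i) - d) := by
  rw [sum_perm_apply_zero_apply_one (fun p q => Pi.single q (d p)), Finset.sum_sub_distrib,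
    LinearMap.sum_single_apply (φ := fun _ => M) d]
  congr 2
  ext i
  simp [Finset.sum_apply, Pi.single_apply]

end SumPerm

theorem average_PFtPtDPe1 (n : ℕ) (hn : 2 ≤ n) (d : Fin n → ℝ)
    (dav : ℝ) (hdav : dav = (∑ i, d i) / n) :
    ((n.factorial : ℝ))⁻¹ •
        ∑ σ : Equiv.Perm (Fin n),
          (permMat σ * (matF n)ᵀ * (permMat σ)ᵀ * Matrix.diagonal d * permMat σ).mulVec
            (Pi.single (⟨0, by omega⟩ : Fin n) 1)
      = ((n : ℝ) - 1)⁻¹ • (dav • (fun _ => 1 : Fin n → ℝ) - ((n : ℝ))⁻¹ • d) := by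
  obtain ⟨m, rfl⟩ : ∃ m, n = m + 2 := ⟨n - 2, by omega⟩
  have hterm (σ : Equiv.Perm (Fin (m + 2))) :
      (permMat σ * (matF (m + 2))ᵀ * (permMat σ)ᵀ * diagonal d * permMat σ) *ᵥ Pi.single 0 1
        = Pi.single (σ 1) (d (σ 0)) :=
    permMat_conj_matF_transpose_mulVec_single σ d (by simp)
  rw [show (⟨0, _⟩ : Fin (m + 2)) = 0 from rfl, Fintype.sum_congr _ _ hterm,
    sum_perm_single_apply_one, hdav, Nat.factorial_succ, Nat.factorial_succ]
  ext i
  simp only [Pi.smul_apply, Pi.sub_apply, smul_eq_mul, mul_one]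
  rw [nsmul_eq_mul]
  push_cast
  rw [show (m : ℝ) + 2 - 1 = m + 1 by ring]
  field_simp
  ring
end

section
/- Let n ≥ 1, let δ ∈ ℝ, and let E be the n×n matrix with E_{ij} = 1 for i > j and E_{ij} = 0 otherwise. Then I + (1−δ)E is invertible, and the matrix L̄ := −(I + (1−δ)E)^{−1} has entries L̄_{ij} = −1 if i = j, L̄_{ij} = (1−δ)·δ^{i−j−1} if i > j, and L̄_{ij} = 0 if i < j. -/
open Matrix

/-- The strictly lower triangular matrix of all ones below the diagonal. -/
def matE (n : ℕ) : Matrix (Fin n) (Fin n) ℝ :=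
  Matrix.of fun i j => if (j : ℕ) < (i : ℕ) then 1 else 0

open Finset

/-- The entries of `(1 + (1 - δ) • matE n)⁻¹`, indexed by `ℕ` rather than `Fin n` so that column
sums can be computed by induction on their length. -/
def lowerInvEntry (δ : ℝ) (a c : ℕ) : ℝ :=
  if a = c then 1 else if c < a then -((1 - δ) * δ ^ (a - c - 1)) else 0

-- The column sums telescope: adding the entry `-(1 - δ) δ^k` to `δ^k` gives `δ^(k+1)`.
theorem sum_range_lowerInvEntry (δ : ℝ) (a c : ℕ) :
    ∑ m ∈ range a, lowerInvEntry δ m c = if c < a then δ ^ (a - c - 1) else 0 := by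
  induction a with
  | zero => simp
  | succ a ih =>
    rw [sum_range_succ, ih, lowerInvEntry]
    rcases lt_trichotomy a c with h | rfl | h
    · simp [h.ne, h.not_gt, show ¬ c < a + 1 by omega]
    · simp
    · rw [if_pos h, if_neg h.ne', if_pos h, if_pos (by omega),
        show a + 1 - c - 1 = a - c - 1 + 1 by omega]
      ring

theorem lowerInvEntry_add_mul_sum_range (δ : ℝ) (a c : ℕ) :
    lowerInvEntry δ a c + (1 - δ) * ∑ m ∈ range a, lowerInvEntry δ m c =
      if a = c then 1 else 0 := by
  rw [sum_range_lowerInvEntry, lowerInvEntry]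
  rcases lt_trichotomy a c with h | rfl | h
  · simp [h.ne, h.not_gt]
  · simp
  · simp only [if_neg h.ne', if_pos h]
    ring

theorem matE_mul_of_apply {n : ℕ} (f : ℕ → ℕ → ℝ) (i j : Fin n) :
    (matE n * Matrix.of fun k l : Fin n => f k l) i j = ∑ m ∈ range i, f m j := by
  simp only [mul_apply, matE, of_apply, ite_mul, one_mul, zero_mul]
  rw [Fin.sum_univ_eq_sum_range (fun m => if m < (i : ℕ) then f m j else 0), ← sum_filter,
    range_eq_Ico, Ico_filter_lt, min_eq_right i.is_lt.le, range_eq_Ico]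

theorem Lbar_entries_general (n : ℕ) (δ : ℝ) :
    IsUnit ((1 : Matrix (Fin n) (Fin n) ℝ) + (1 - δ) • matE n) ∧
    ∀ i j : Fin n,
      (-((1 : Matrix (Fin n) (Fin n) ℝ) + (1 - δ) • matE n)⁻¹) i j =
        if i = j then -1
        else if (j : ℕ) < (i : ℕ) then (1 - δ) * δ ^ ((i : ℕ) - (j : ℕ) - 1)
        else 0 := by
  have hinv : ((1 : Matrix (Fin n) (Fin n) ℝ) + (1 - δ) • matE n) *
      Matrix.of (fun k l : Fin n => lowerInvEntry δ k l) = 1 := by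
    ext i j
    rw [add_mul, one_mul, smul_mul_assoc, Matrix.add_apply, Matrix.smul_apply,
      matE_mul_of_apply, smul_eq_mul, of_apply, lowerInvEntry_add_mul_sum_range, one_apply]
    simp only [Fin.val_inj]
  refine ⟨.of_mul_eq_one _ hinv, fun i j => ?_⟩
  rw [inv_eq_right_inv hinv, Matrix.neg_apply, of_apply, lowerInvEntry]
  simp only [Fin.val_inj]
  split_ifs <;> ring

theorem Lbar_entries (n : ℕ) (hn : 1 ≤ n) (δ : ℝ) :
    IsUnit ((1 : Matrix (Fin n) (Fin n) ℝ) + (1 - δ) • matE n) ∧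
    ∀ i j : Fin n,
      (-((1 : Matrix (Fin n) (Fin n) ℝ) + (1 - δ) • matE n)⁻¹) i j =
        if i = j then -1
        else if (j : ℕ) < (i : ℕ) then (1 - δ) * δ ^ ((i : ℕ) - (j : ℕ) - 1)
        else 0 :=
  Lbar_entries_general n δ
end

section
/- Let n ≥ 1 and let D be an n×n diagonal matrix with diagonal vector d := D𝟏 and d_av := 𝟏^T d / n. For a permutation matrix P write D_P := P^T D P. Then the average over all n! permutation matrices P satisfies (1/n!)·∑_{P} P (I − 𝟏 e₁^T) D_P (I − e₁ 𝟏^T) P^T = D − (1/n)·( 𝟏 d^T + d 𝟏^T ) + d_av·𝟏𝟏^T. -/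
/-!
Since `P 𝟏 = 𝟏` and `P Pᵀ = I`, conjugation by `P` turns `I - 𝟏 e₁ᵀ` into `I - 𝟏 e_{σ(1)}ᵀ`, so the
summand for `σ` depends only on `k = σ(1)` and equals `D - 𝟏 (d_k e_k)ᵀ - (d_k e_k) 𝟏ᵀ + d_k 𝟏𝟏ᵀ`.
As `σ(1)` is uniformly distributed over the indices, averaging over `σ` is averaging over `k`.
-/

open Matrix

open Equiv Finset

section Average

variable {α M : Type*} [Fintype α] [DecidableEq α]

theorem card_smul_sum_perm_apply [AddCommMonoid M] (f : α → M) (a : α) :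
    Fintype.card α • ∑ σ : Perm α, f (σ a) = (Fintype.card α).factorial • ∑ x, f x := by
  have h_indep (b : α) : ∑ σ : Perm α, f (σ b) = ∑ σ : Perm α, f (σ a) :=
    Fintype.sum_equiv (Equiv.mulRight (swap a b)) _ _ fun σ => by simp
  calc Fintype.card α • ∑ σ : Perm α, f (σ a)
      = ∑ b, ∑ σ : Perm α, f (σ b) := by simp [h_indep]
    _ = ∑ σ : Perm α, ∑ b, f (σ b) := Finset.sum_comm
    _ = (Fintype.card α).factorial • ∑ x, f x := by
      simp [Equiv.sum_comp, Fintype.card_perm]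

theorem factorial_inv_smul_sum_perm_apply {K : Type*} [Field K] [CharZero K]
    [AddCommGroup M] [Module K M] (f : α → M) (a : α) :
    ((Fintype.card α).factorial : K)⁻¹ • ∑ σ : Perm α, f (σ a)
      = (Fintype.card α : K)⁻¹ • ∑ x, f x := by
  have hcard : (Fintype.card α : K) ≠ 0 :=
    Nat.cast_ne_zero.mpr (Fintype.card_pos_iff.mpr ⟨a⟩).ne'
  have hfact : ((Fintype.card α).factorial : K) ≠ 0 :=
    Nat.cast_ne_zero.mpr (Nat.factorial_ne_zero _)
  have h := card_smul_sum_perm_apply f a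
  rw [← Nat.cast_smul_eq_nsmul K, ← Nat.cast_smul_eq_nsmul K] at h
  calc ((Fintype.card α).factorial : K)⁻¹ • ∑ σ : Perm α, f (σ a)
      = ((Fintype.card α).factorial : K)⁻¹ • (Fintype.card α : K)⁻¹ •
          (Fintype.card α : K) • ∑ σ : Perm α, f (σ a) := by
        rw [inv_smul_smul₀ hcard]
    _ = (Fintype.card α : K)⁻¹ • ∑ x, f x := by
        rw [h, smul_comm, inv_smul_smul₀ hfact]

end Average

section Conjugation

variable {ι R : Type*} [Fintype ι] [DecidableEq ι] [CommRing R]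

theorem conj_one_sub_vecMulVec {Q : Matrix ι ι R} (hQ : Q * Qᵀ = 1) (u v : ι → R) :
    Q * (1 - vecMulVec u v) * Qᵀ = 1 - vecMulVec (Q *ᵥ u) (Q *ᵥ v) := by
  rw [mul_sub, sub_mul, mul_one, hQ, mul_vecMulVec, vecMulVec_mul, vecMul_transpose]

theorem one_sub_vecMulVec_mul_diagonal_mul (d : ι → R) (k : ι) :
    (1 - vecMulVec 1 (Pi.single k 1)) * diagonal d * (1 - vecMulVec (Pi.single k 1) 1)
      = diagonal d - vecMulVec 1 (Pi.single k (d k)) - vecMulVec (Pi.single k (d k)) 1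
        + d k • vecMulVec 1 1 := by
  ext i j
  by_cases hik : i = k <;> by_cases hjk : j = k <;> by_cases hij : i = j <;>
    simp [Matrix.sub_mul, mul_sub, mul_apply, diagonal_apply, one_apply, Pi.single_apply,
      sum_sub_distrib, *]

theorem sum_one_sub_vecMulVec_mul_diagonal_mul (d : ι → R) :
    ∑ k, (1 - vecMulVec 1 (Pi.single k 1)) * diagonal d * (1 - vecMulVec (Pi.single k 1) 1)
      = Fintype.card ι • diagonal d - vecMulVec 1 d - vecMulVec d 1
        + (∑ k, d k) • vecMulVec 1 1 := by
  have hleft : ∑ k, vecMulVec (1 : ι → R) (Pi.single k (d k)) = vecMulVec 1 d := by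
    ext i j
    simp only [Matrix.sum_apply, vecMulVec_apply, Pi.one_apply, one_mul, sum_pi_single, mem_univ,
      if_true]
  have hright : ∑ k, vecMulVec (Pi.single k (d k)) (1 : ι → R) = vecMulVec d 1 := by
    ext i j
    simp only [Matrix.sum_apply, vecMulVec_apply, Pi.one_apply, mul_one, sum_pi_single, mem_univ,
      if_true]
  simp only [one_sub_vecMulVec_mul_diagonal_mul, sum_add_distrib, sum_sub_distrib, sum_const,
    card_univ, hleft, hright, sum_smul]

end Conjugation

theorem permMat_eq_permMatrix {n : ℕ} (σ : Perm (Fin n)) : permMat σ = σ⁻¹.permMatrix ℝ := by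
  ext i j
  simp [permMat, PEquiv.toMatrix_apply, Equiv.symm_apply_eq]

theorem permMat_mul_transpose {n : ℕ} (σ : Perm (Fin n)) : permMat σ * (permMat σ)ᵀ = 1 := by
  rw [permMat_eq_permMatrix, transpose_permMatrix, ← permMatrix_mul, inv_inv, mul_inv_cancel,
    permMatrix_one]

theorem permMat_mulVec {n : ℕ} (σ : Perm (Fin n)) (v : Fin n → ℝ) :
    permMat σ *ᵥ v = v ∘ σ.symm := by
  rw [permMat_eq_permMatrix, permMatrix_mulVec, Perm.inv_def]

theorem permMat_conj_centered_diagonal {n : ℕ} (σ : Perm (Fin n)) (d : Fin n → ℝ) (a : Fin n) :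
    permMat σ * (1 - vecMulVec 1 (Pi.single a 1)) * ((permMat σ)ᵀ * diagonal d * permMat σ)
        * (1 - vecMulVec (Pi.single a 1) 1) * (permMat σ)ᵀ
      = (1 - vecMulVec 1 (Pi.single (σ a) 1)) * diagonal d
        * (1 - vecMulVec (Pi.single (σ a) 1) 1) := by
  have hconj (u v : Fin n → ℝ) : permMat σ * (1 - vecMulVec u v) * (permMat σ)ᵀ
      = 1 - vecMulVec (u ∘ σ.symm) (v ∘ σ.symm) := by
    rw [conj_one_sub_vecMulVec (permMat_mul_transpose σ), permMat_mulVec, permMat_mulVec]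
  calc _ = (permMat σ * (1 - vecMulVec 1 (Pi.single a 1)) * (permMat σ)ᵀ) * diagonal d
        * (permMat σ * (1 - vecMulVec (Pi.single a 1) 1) * (permMat σ)ᵀ) := by
          simp only [Matrix.mul_assoc]
    _ = _ := by
      rw [hconj, hconj, Pi.single_comp_equiv, Equiv.symm_symm]
      rfl

theorem average_D_term (n : ℕ) (hn : 1 ≤ n) (d : Fin n → ℝ)
    (dav : ℝ) (hdav : dav = (∑ i, d i) / n) :
    ((n.factorial : ℝ))⁻¹ •
        ∑ σ : Equiv.Perm (Fin n),
          permMat σ *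
            ((1 : Matrix (Fin n) (Fin n) ℝ)
              - Matrix.vecMulVec (fun _ => 1) (Pi.single (⟨0, by omega⟩ : Fin n) 1)) *
            ((permMat σ)ᵀ * Matrix.diagonal d * permMat σ) *
            ((1 : Matrix (Fin n) (Fin n) ℝ)
              - Matrix.vecMulVec (Pi.single (⟨0, by omega⟩ : Fin n) 1) (fun _ => 1)) *
            (permMat σ)ᵀ
      = Matrix.diagonal d
        - (1 / (n : ℝ)) • (Matrix.vecMulVec (fun _ => 1) d + Matrix.vecMulVec d (fun _ => 1))
        + dav • Matrix.vecMulVec (fun _ => 1) (fun _ => 1) := by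
  have hn' : (n : ℝ) ≠ 0 := Nat.cast_ne_zero.mpr (by omega)
  simp only [← Pi.one_def, permMat_conj_centered_diagonal]
  have havg := factorial_inv_smul_sum_perm_apply (K := ℝ)
    (fun k => (1 - vecMulVec 1 (Pi.single k 1)) * diagonal d * (1 - vecMulVec (Pi.single k 1) 1))
    (⟨0, by omega⟩ : Fin n)
  rw [Fintype.card_fin] at havg
  rw [havg, sum_one_sub_vecMulVec_mul_diagonal_mul, Fintype.card_fin, ← Nat.cast_smul_eq_nsmul ℝ,
    hdav]
  match_scalars <;> field_simp
end
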